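/- arXiv:1702.02878 — 9 statements merged into one kernel-verified Lean document; each statement's English description precedes it below -/
import Mathlib

section
/- Let n ≥ 1 and let c, d : ℝ → ℝ³ be polynomial curves of degree at most n. Suppose there exist functions Λ, M : ℝ → ℝ such that for all u, c(u) + ((Λ(u) − u)/n)·c'(u) = d(u) + ((M(u) − u)/n)·d'(u). Then for every u the three vectors c'(u), d'(u), and d(u) − c(u) are linearly dependent (coplanar), i.e. the ruled surface b(u,v) = (1−v)c(u) + v·d(u) is developable. -/
/-- if two polynomial curves of degree at most `n` satisfy the blossom
relation `c[u^{<n-1>},Λ(u)] = d[u^{<n-1>},M(u)]`, i.e.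
`c(u) + ((Λ(u)−u)/n)·c'(u) = d(u) + ((M(u)−u)/n)·d'(u)`, then for every `u` the
vectors `c'(u)`, `d'(u)` and `d(u)−c(u)` are linearly dependent, so the ruled
surface `b(u,v) = (1−v)c(u) + v·d(u)` is developable. -/
theorem blossom_relation_implies_developable
    (n : ℕ) (hn : 1 ≤ n) (c d : ℝ → Fin 3 → ℝ)
    (pc pd : Fin 3 → Polynomial ℝ)
    (hpc : ∀ i, (pc i).natDegree ≤ n) (hpd : ∀ i, (pd i).natDegree ≤ n)
    (hc : ∀ u i, c u i = (pc i).eval u) (hd : ∀ u i, d u i = (pd i).eval u)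
    (Λ M : ℝ → ℝ)
    (hdev : ∀ u, c u + ((Λ u - u) / (n : ℝ)) • deriv c u
               = d u + ((M u - u) / (n : ℝ)) • deriv d u) :
    ∀ u, ¬ LinearIndependent ℝ ![deriv c u, deriv d u, d u - c u] := by
  intro u h
  set a : ℝ := (Λ u - u) / (n : ℝ) with ha
  set b : ℝ := (M u - u) / (n : ℝ) with hb
  have hu : c u + a • deriv c u = d u + b • deriv d u := hdev u
  have key : a • deriv c u + (-b) • deriv d u + (-1 : ℝ) • (d u - c u) = 0 := by
    have : d u - c u = a • deriv c u - b • deriv d u := by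
      linear_combination (norm := module) (-1 : ℝ) • hu
    rw [this]
    module
  rw [Fintype.linearIndependent_iff] at h
  have := h ![a, -b, -1] (by
    simpa [Fin.sum_univ_three] using key) 2
  have h01 : (0:ℝ) = -1 := this.symm.trans rfl
  norm_num at h01
end

section
/- Let n ≥ 1 and let c, d : ℝ → ℝ³ be differentiable curves with v(u) = d(u) − c(u). Suppose λ, μ : ℝ → ℝ satisfy c'(u) = λ(u)·v(u) + μ(u)·v'(u) for all u, and λ(u) ≠ 0 for all u. Define Λ(u) = (n(μ(u)+1) + u·λ(u))/λ(u) and M(u) = (n·μ(u) + u·λ(u))/λ(u). Then for all u, c(u) + ((Λ(u) − u)/n)·c'(u) = d(u) + ((M(u) − u)/n)·d'(u). -/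
/-! Since `Λ(u) − u = n(μ(u)+1)/λ(u)` and `M(u) − u = n μ(u)/λ(u)`, the relation says
`λ c + (μ+1) c' = λ d + μ d'` after multiplying by `λ`, which is the developability
condition `c' = λ (d − c) + μ (d' − c')` rearranged. -/

theorem add_div_smul_eq_add_div_smul_of_eq_smul_sub_add_smul_sub
    {K E : Type*} [Field K] [AddCommGroup E] [Module K E] {l m : K} (hl : l ≠ 0)
    {c d c' d' : E} (h : c' = l • (d - c) + m • (d' - c')) :
    c + ((m + 1) / l) • c' = d + (m / l) • d' := by
  apply smul_right_injective E hl
  simp only [smul_add, smul_smul, mul_div_cancel₀ _ hl]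
  linear_combination (norm := module) h

theorem mul_add_mul_div_sub_div {K : Type*} [Field K] {n a l : K} (hn : n ≠ 0) (hl : l ≠ 0)
    (u : K) : ((n * a + u * l) / l - u) / n = a / l := by
  field_simp
  ring

/-- from the differential developability condition
`c' = λ·v + μ·v'` with `v = d − c` and `λ ≠ 0`, the functions
`Λ(u) = (n(μ(u)+1) + u·λ(u))/λ(u)` and `M(u) = (n·μ(u) + u·λ(u))/λ(u)` satisfy the
algebraic (blossom) developability relation. -/
theorem lambda_mu_to_blossom_relation
    (n : ℕ) (hn : 1 ≤ n) (c d : ℝ → Fin 3 → ℝ)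
    (hc : Differentiable ℝ c) (hd : Differentiable ℝ d)
    (v : ℝ → Fin 3 → ℝ) (hv : ∀ u, v u = d u - c u)
    (lam mu : ℝ → ℝ)
    (hode : ∀ u, deriv c u = lam u • v u + mu u • deriv v u)
    (hlam : ∀ u, lam u ≠ 0)
    (Λ M : ℝ → ℝ)
    (hΛ : ∀ u, Λ u = ((n : ℝ) * (mu u + 1) + u * lam u) / lam u)
    (hM : ∀ u, M u = ((n : ℝ) * mu u + u * lam u) / lam u) :
    ∀ u, c u + ((Λ u - u) / (n : ℝ)) • deriv c u
       = d u + ((M u - u) / (n : ℝ)) • deriv d u := by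
  intro u
  have hn₀ : (n : ℝ) ≠ 0 := Nat.cast_ne_zero.mpr (by omega)
  have hv' : deriv v u = deriv d u - deriv c u := by
    rw [show v = d - c from funext hv]
    exact deriv_sub (hd u) (hc u)
  rw [hΛ u, hM u, mul_add_mul_div_sub_div hn₀ (hlam u), mul_add_mul_div_sub_div hn₀ (hlam u)]
  exact add_div_smul_eq_add_div_smul_of_eq_smul_sub_add_smul_sub (hlam u)
    ((hode u).trans (by rw [hv u, hv']))
end

section
/- Let n ≥ 1 and let c, d : ℝ → ℝ³ be differentiable curves and Λ, M : ℝ → ℝ functions with Λ(u) ≠ M(u) for all u, such that c(u) + ((Λ(u) − u)/n)·c'(u) = d(u) + ((M(u) − u)/n)·d'(u) for all u. Set v(u) = d(u) − c(u), λ(u) = n/(Λ(u) − M(u)) and μ(u) = (M(u) − u)/(Λ(u) − M(u)). Then c'(u) = λ(u)·v(u) + μ(u)·v'(u) for all u. -/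
/-- from the algebraic (blossom) developability relation with
`Λ(u) ≠ M(u)`, setting `v = d − c`, `λ(u) = n/(Λ(u)−M(u))` and
`μ(u) = (M(u)−u)/(Λ(u)−M(u))`, the differential developability condition
`c' = λ·v + μ·v'` holds. -/
theorem blossom_relation_to_lambda_mu
    (n : ℕ) (hn : 1 ≤ n) (c d : ℝ → Fin 3 → ℝ)
    (hc : Differentiable ℝ c) (hd : Differentiable ℝ d)
    (Λ M : ℝ → ℝ) (hΛM : ∀ u, Λ u ≠ M u)
    (hdev : ∀ u, c u + ((Λ u - u) / (n : ℝ)) • deriv c u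
               = d u + ((M u - u) / (n : ℝ)) • deriv d u)
    (v : ℝ → Fin 3 → ℝ) (hv : ∀ u, v u = d u - c u)
    (lam mu : ℝ → ℝ)
    (hlam : ∀ u, lam u = (n : ℝ) / (Λ u - M u))
    (hmu : ∀ u, mu u = (M u - u) / (Λ u - M u)) :
    ∀ u, deriv c u = lam u • v u + mu u • deriv v u := by
  intro u
  have hs : Λ u - M u ≠ 0 := sub_ne_zero.mpr (hΛM u)
  have hn0 : (n : ℝ) ≠ 0 := by exact_mod_cast Nat.one_le_iff_ne_zero.mp hn
  have hvf : v = fun u => d u - c u := funext hv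
  have hdv : deriv v u = deriv d u - deriv c u := by
    rw [hvf, deriv_fun_sub (hd u) (hc u)]
  funext i
  have h := congrFun (hdev u) i
  simp only [Pi.add_apply, Pi.smul_apply, smul_eq_mul] at h
  have hvi := congrFun (hv u) i
  simp only [Pi.sub_apply] at hvi
  have hdvi := congrFun hdv i
  simp only [Pi.sub_apply] at hdvi
  rw [Pi.add_apply, Pi.smul_apply, Pi.smul_apply, smul_eq_mul, smul_eq_mul,
    hlam, hmu, hdvi, hvi]
  field_simp at h ⊢
  ring_nf
  ring_nf at h
  linarith [h]
end

section
/- Let n ≥ 1 and let c, d : ℝ → ℝ³ be differentiable curves and Λ, M : ℝ → ℝ functions with Λ(u) ≠ M(u) for all u, such that c(u) + ((Λ(u) − u)/n)·c'(u) = d(u) + ((M(u) − u)/n)·d'(u) for all u. Define the ruled surface b(u,v) = (1−v)c(u) + v·d(u). Then for each u, at the value v* = (u − M(u))/(Λ(u) − M(u)) the partial derivatives ∂b/∂u(u, v*) = (1−v*)c'(u) + v*·d'(u) and ∂b/∂v(u, v*) = d(u) − c(u) are parallel; precisely, (1−v*)c'(u) + v*·d'(u) = (n/(Λ(u) − M(u)))·(d(u)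 − c(u)). Hence the parametrisation of the developable surface is singular along the line v = (u − M(u))/(Λ(u) − M(u)), the edge of regression. -/
/-! Multiplying the blossom relation `c + ((Λ - u)/n) c' = d + ((M - u)/n) d'` by `n/(Λ - M)` turns
the coefficients of `c'` and `d'` into `1 - v*` and `v*`, so `b_u(u, v*)` is a multiple of the
ruling `d - c`. -/

theorem lineMap_eq_smul_sub_of_add_smul_eq_add_smul {K V : Type*} [Field K] [AddCommGroup V]
    [Module K V] {n a b t : K} {p q p' q' : V} (hn : n ≠ 0) (hab : a ≠ b)
    (h : p + ((a - t) / n) • p' = q + ((b - t) / n) • q') :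
    AffineMap.lineMap p' q' ((t - b) / (a - b)) = (n / (a - b)) • (q - p) := by
  have hab' : a - b ≠ 0 := sub_ne_zero.mpr hab
  rw [AffineMap.lineMap_apply_module]
  linear_combination (norm := skip) (n / (a - b)) • h
  match_scalars <;> field_simp <;> ring

theorem edge_of_regression_parametric_equation_general
    (n : ℕ) (hn : 1 ≤ n) (c d : ℝ → Fin 3 → ℝ)
    (Λ M : ℝ → ℝ) (hΛM : ∀ u, Λ u ≠ M u)
    (hdev : ∀ u, c u + ((Λ u - u) / (n : ℝ)) • deriv c u
               = d u + ((M u - u) / (n : ℝ)) • deriv d u) :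
    ∀ u, (1 - (u - M u) / (Λ u - M u)) • deriv c u
         + ((u - M u) / (Λ u - M u)) • deriv d u
       = ((n : ℝ) / (Λ u - M u)) • (d u - c u) := by
  intro u
  rw [← AffineMap.lineMap_apply_module]
  have hn' : (n : ℝ) ≠ 0 := Nat.cast_ne_zero.mpr (by omega)
  exact lineMap_eq_smul_sub_of_add_smul_eq_add_smul hn' (hΛM u) (hdev u)

/-- along the line `v* = (u − M(u))/(Λ(u) − M(u))` the partial
derivatives `b_u(u,v*) = (1−v*)c'(u) + v*·d'(u)` and `b_v(u,v*) = d(u) − c(u)` of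
the developable patch `b(u,v) = (1−v)c(u) + v·d(u)` are parallel; precisely,
`(1−v*)·c'(u) + v*·d'(u) = (n/(Λ(u)−M(u)))·(d(u)−c(u))`. This line is the edge of
regression, where the parametrisation is singular. -/
theorem edge_of_regression_parametric_equation
    (n : ℕ) (hn : 1 ≤ n) (c d : ℝ → Fin 3 → ℝ)
    (hc : Differentiable ℝ c) (hd : Differentiable ℝ d)
    (Λ M : ℝ → ℝ) (hΛM : ∀ u, Λ u ≠ M u)
    (hdev : ∀ u, c u + ((Λ u - u) / (n : ℝ)) • deriv c u
               = d u + ((M u - u) / (n : ℝ)) • deriv d u) :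
    ∀ u, (1 - (u - M u) / (Λ u - M u)) • deriv c u
         + ((u - M u) / (Λ u - M u)) • deriv d u
       = ((n : ℝ) / (Λ u - M u)) • (d u - c u) :=
  edge_of_regression_parametric_equation_general n hn c d Λ M hΛM hdev
end

section
/- Let n ≥ 1, let c, d : ℝ → ℝ³ be differentiable curves and Λ, M : ℝ → ℝ functions such that c(u) + ((Λ(u) − u)/n)·c'(u) = d(u) + ((M(u) − u)/n)·d'(u) for all u. Fix a, b ∈ ℝ and define the curves c̃(u) = (1−a)c(u) + a·d(u) and d̃(u) = (1−b)c(u) + b·d(u), and the functions Λ̃(u) = b·Λ(u) + (1−b)·M(u) and M̃(u) = a·Λ(u) + (1−a)·M(u). Then c̃(u) + ((Λ̃(u) − u)/n)·c̃'(u) = d̃(u) + ((M̃(u) − u)/n)·d̃'(u) for all u. -/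
/-- restriction of the parameter `v` of a developable patch to
`[a,b]`: the new boundary curves `c̃ = (1−a)c + a·d`, `d̃ = (1−b)c + b·d` satisfy
the developability relation with `Λ̃ = b·Λ + (1−b)·M` and `M̃ = a·Λ + (1−a)·M`. -/
theorem restriction_of_parameter_v
    (n : ℕ) (hn : 1 ≤ n) (c d : ℝ → Fin 3 → ℝ)
    (hc : Differentiable ℝ c) (hd : Differentiable ℝ d)
    (Λ M : ℝ → ℝ)
    (hdev : ∀ u, c u + ((Λ u - u) / (n : ℝ)) • deriv c u
               = d u + ((M u - u) / (n : ℝ)) • deriv d u)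
    (a b : ℝ) (ct dt : ℝ → Fin 3 → ℝ)
    (hct : ∀ u, ct u = (1 - a) • c u + a • d u)
    (hdt : ∀ u, dt u = (1 - b) • c u + b • d u)
    (Λt Mt : ℝ → ℝ)
    (hΛt : ∀ u, Λt u = b * Λ u + (1 - b) * M u)
    (hMt : ∀ u, Mt u = a * Λ u + (1 - a) * M u) :
    ∀ u, ct u + ((Λt u - u) / (n : ℝ)) • deriv ct u
       = dt u + ((Mt u - u) / (n : ℝ)) • deriv dt u := by
  intro u
  have hctf : ct = fun u => (1 - a) • c u + a • d u := funext hct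
  have hdtf : dt = fun u => (1 - b) • c u + b • d u := funext hdt
  have dct : deriv ct u = (1 - a) • deriv c u + a • deriv d u := by
    rw [hctf, deriv_fun_add (f := fun y => (1 - a) • c y) (g := fun y => a • d y) ((hc u).const_smul (1 - a)) ((hd u).const_smul a),
      deriv_fun_const_smul _ (hc u), deriv_fun_const_smul _ (hd u)]
  have ddt : deriv dt u = (1 - b) • deriv c u + b • deriv d u := by
    rw [hdtf, deriv_fun_add (f := fun y => (1 - b) • c y) (g := fun y => b • d y) ((hc u).const_smul (1 - b)) ((hd u).const_smul b),
      deriv_fun_const_smul _ (hc u), deriv_fun_const_smul _ (hd u)]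
  funext i
  have keyi := congrFun (hdev u) i
  simp only [Pi.add_apply, Pi.smul_apply, smul_eq_mul] at keyi
  simp only [hct, hdt, hΛt, hMt, dct, ddt, Pi.add_apply, Pi.smul_apply, smul_eq_mul]
  linear_combination (b - a) * keyi
end

section
/- Let n ≥ 1, let c₀,…,cₙ and d₀,…,dₙ be points of ℝ³, and let Λ, M ∈ ℝ be constants such that (1−Λ)·cᵢ + Λ·cᵢ₊₁ = (1−M)·dᵢ + M·dᵢ₊₁ for every i = 0,…,n−1. Define the Bézier curves c(u) = Σᵢ cᵢ·Bᵢⁿ(u) and d(u) = Σᵢ dᵢ·Bᵢⁿ(u), where Bᵢⁿ is the i-th Bernstein polynomial of degree n. Then c(u) + ((Λ − u)/n)·c'(u) = d(u) + ((M − u)/n)·d'(u) for all u. -/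
/-!
From `Bᵢⁿ⁺¹ = (1 - u)·Bᵢⁿ + u·Bᵢ₋₁ⁿ` and `(Bᵢⁿ⁺¹)' = (n + 1)·(Bᵢ₋₁ⁿ - Bᵢⁿ)`, a Bézier curve of
degree `n + 1` and its derivative are both Bézier curves of degree `n`:
`c(u) = Σⱼ Bⱼⁿ(u)·((1 - u)·cⱼ + u·cⱼ₊₁)` and `c'(u) = (n + 1)·Σⱼ Bⱼⁿ(u)·(cⱼ₊₁ - cⱼ)`.
Hence `c(u) + ((Λ - u)/(n + 1))·c'(u) = Σⱼ Bⱼⁿ(u)·((1 - Λ)·cⱼ + Λ·cⱼ₊₁)`, the degree-`n` curve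
whose control points are the cell combinations of the hypothesis; likewise for `d` with `M`.
-/

open Polynomial Finset

namespace bernsteinPolynomial

variable (R : Type*) [CommRing R]

theorem succ_zero (n : ℕ) :
    bernsteinPolynomial R (n + 1) 0 = (1 - X) * bernsteinPolynomial R n 0 := by
  simp [bernsteinPolynomial, pow_succ, mul_comm]

theorem succ_succ (n ν : ℕ) :
    bernsteinPolynomial R (n + 1) (ν + 1) =
      (1 - X) * bernsteinPolynomial R n (ν + 1) + X * bernsteinPolynomial R n ν := by
  have hleft : ((n.choose (ν + 1) : ℕ) : R[X]) * X ^ (ν + 1) * (1 - X) ^ (n - ν) =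
      (1 - X) * bernsteinPolynomial R n (ν + 1) := by
    rcases lt_or_ge ν n with h | h
    · rw [bernsteinPolynomial, show n - ν = n - (ν + 1) + 1 by omega, pow_succ]
      ring
    · simp [bernsteinPolynomial, Nat.choose_eq_zero_of_lt (Nat.lt_succ_of_le h)]
  conv_lhs => rw [bernsteinPolynomial]
  rw [Nat.choose_succ_succ, Nat.cast_add, Nat.succ_sub_succ, add_mul, add_mul, hleft]
  simp only [bernsteinPolynomial]
  ring

end bernsteinPolynomial

theorem Fin.sum_smul_castSucc_add_smul_succ {R M : Type*} [CommSemiring R] [AddCommMonoid M]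
    [Module R M] {n : ℕ} (a : ℕ → R) (ha : a (n + 1) = 0) (x y : R) (p : Fin (n + 2) → M) :
    ∑ j : Fin (n + 1), a j • (x • p j.castSucc + y • p j.succ) =
      (x * a 0) • p 0 + ∑ j : Fin (n + 1), (x * a (j + 1) + y * a j) • p j.succ := by
  have hshift := (Fin.sum_univ_castSucc fun i : Fin (n + 2) => (x * a i) • p i).symm.trans
    (Fin.sum_univ_succ fun i : Fin (n + 2) => (x * a i) • p i)
  simp only [Fin.val_castSucc, Fin.val_last, ha, mul_zero, zero_smul, add_zero, Fin.val_zero,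
    Fin.val_succ] at hshift
  simp only [smul_add, smul_smul, add_smul, sum_add_distrib, ← add_assoc, mul_comm (a _), ← hshift]

section Bezier

variable {R M : Type*} [CommRing R] [AddCommGroup M] [Module R M]

noncomputable def bezier {n : ℕ} (p : Fin (n + 1) → M) (u : R) : M :=
  ∑ i : Fin (n + 1), (bernsteinPolynomial R n i).eval u • p i

theorem bezier_eq_bezier_interpolate {n : ℕ} (p : Fin (n + 2) → M) (u : R) :
    bezier p u = bezier (fun j : Fin (n + 1) => (1 - u) • p j.castSucc + u • p j.succ) u := by
  rw [bezier, bezier, Fin.sum_smul_castSucc_add_smul_succ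
    (fun j => (bernsteinPolynomial R n j).eval u) (by simp [bernsteinPolynomial.eq_zero_of_lt]),
    Fin.sum_univ_succ]
  simp [bernsteinPolynomial.succ_zero, bernsteinPolynomial.succ_succ]

theorem sum_derivative_bernsteinPolynomial_eval_smul {n : ℕ} (p : Fin (n + 2) → M) (u : R) :
    ∑ i : Fin (n + 2), (derivative (bernsteinPolynomial R (n + 1) i)).eval u • p i =
      ((n : R) + 1) • bezier (fun j : Fin (n + 1) => p j.succ - p j.castSucc) u := by
  have hterm (j : Fin (n + 1)) : ((n : R) + 1) • ((bernsteinPolynomial R n j).eval u •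
      (p j.succ - p j.castSucc)) = (bernsteinPolynomial R n j).eval u •
        (-((n : R) + 1) • p j.castSucc + ((n : R) + 1) • p j.succ) := by
    module
  rw [bezier, smul_sum, sum_congr rfl fun j _ => hterm j, Fin.sum_smul_castSucc_add_smul_succ
    (fun j => (bernsteinPolynomial R n j).eval u) (by simp [bernsteinPolynomial.eq_zero_of_lt]),
    Fin.sum_univ_succ]
  congr 1
  · simp [bernsteinPolynomial.derivative_zero]
  · refine sum_congr rfl fun j _ => congrArg (· • p j.succ) ?_
    simp [bernsteinPolynomial.derivative_succ]
    ring

end Bezier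

section Derivative

variable {𝕜 E : Type*} [NontriviallyNormedField 𝕜] [NormedAddCommGroup E] [NormedSpace 𝕜 E]

theorem hasDerivAt_bezier {n : ℕ} (p : Fin (n + 1) → E) (u : 𝕜) :
    HasDerivAt (bezier p)
      (∑ i : Fin (n + 1), (derivative (bernsteinPolynomial 𝕜 n i)).eval u • p i) u :=
  HasDerivAt.fun_sum fun i _ => ((bernsteinPolynomial 𝕜 n i).hasDerivAt u).smul_const (p i)

theorem deriv_bezier {n : ℕ} (p : Fin (n + 2) → E) (u : 𝕜) :
    deriv (bezier p) u =
      ((n : 𝕜) + 1) • bezier (fun j : Fin (n + 1) => p j.succ - p j.castSucc) u := by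
  rw [(hasDerivAt_bezier p u).deriv, sum_derivative_bernsteinPolynomial_eval_smul]

theorem bezier_add_smul_deriv_bezier [CharZero 𝕜] {n : ℕ} (p : Fin (n + 2) → E) (u Λ : 𝕜) :
    bezier p u + ((Λ - u) / ((n : 𝕜) + 1)) • deriv (bezier p) u =
      bezier (fun j : Fin (n + 1) => (1 - Λ) • p j.castSucc + Λ • p j.succ) u := by
  rw [deriv_bezier, smul_smul, div_mul_cancel₀ _ (Nat.cast_add_one_ne_zero n),
    bezier_eq_bezier_interpolate]
  simp only [bezier, smul_sum, ← sum_add_distrib]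
  refine sum_congr rfl fun j _ => ?_
  module

end Derivative

/-- Aumann's condition. If the control points of two Bézier curves
of degree `n` satisfy `(1−Λ)·cᵢ + Λ·cᵢ₊₁ = (1−M)·dᵢ + M·dᵢ₊₁` for all
`i = 0,…,n−1` with constants `Λ, M`, then the curves satisfy the developability
relation `c(u) + ((Λ−u)/n)·c'(u) = d(u) + ((M−u)/n)·d'(u)`. -/
theorem aumann_control_net_condition
    (n : ℕ) (hn : 1 ≤ n)
    (cp dp : Fin (n + 1) → Fin 3 → ℝ) (Λ M : ℝ)
    (hcell : ∀ i : Fin n,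
      (1 - Λ) • cp i.castSucc + Λ • cp i.succ
        = (1 - M) • dp i.castSucc + M • dp i.succ)
    (c d : ℝ → Fin 3 → ℝ)
    (hc : ∀ u, c u = ∑ i : Fin (n + 1), (bernsteinPolynomial ℝ n i).eval u • cp i)
    (hd : ∀ u, d u = ∑ i : Fin (n + 1), (bernsteinPolynomial ℝ n i).eval u • dp i) :
    ∀ u, c u + ((Λ - u) / (n : ℝ)) • deriv c u
       = d u + ((M - u) / (n : ℝ)) • deriv d u := by
  intro u
  obtain ⟨m, rfl⟩ := Nat.exists_eq_add_of_le' hn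
  obtain rfl : c = bezier cp := funext hc
  obtain rfl : d = bezier dp := funext hd
  rw [Nat.cast_succ, bezier_add_smul_deriv_bezier, bezier_add_smul_deriv_bezier, funext hcell]
end

section
/- Let n ≥ 1, let c, d : ℝ → ℝ³ be differentiable curves and Λ, M ∈ ℝ constants with Λ ≠ M, such that c(u) + ((Λ − u)/n)·c'(u) = d(u) + ((M − u)/n)·d'(u) for all u. Define r(u) = c(u) + ((u − M)/(Λ − M))·(d(u) − c(u)). Then r'(u) = ((n+1)/(Λ − M))·(d(u) − c(u)) for all u. -/
/-!
Write `s(u) = (u - M)/(Λ - M)`, so `r = c + s • (d - c)` and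
`(Λ - M) • r' = (Λ - u) • c' + (u - M) • d' + (d - c)`.
Multiplying the blossom relation by `n` turns it into `(Λ - u) • c' + (u - M) • d' = n • (d - c)`,
which leaves `(Λ - M) • r' = (n + 1) • (d - c)`.
-/

section

variable {𝕜 E : Type*}

theorem smul_sub_eq_of_add_div_smul_eq [Field 𝕜] [AddCommGroup E] [Module 𝕜 E]
    {n Λ M u : 𝕜} (hn : n ≠ 0) {x x' y y' : E}
    (h : x + ((Λ - u) / n) • x' = y + ((M - u) / n) • y') :
    n • (y - x) = (Λ - u) • x' + (u - M) • y' := by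
  have h' := congrArg (n • ·) h
  simp only [smul_add, smul_smul, mul_div_cancel₀ _ hn] at h'
  rw [smul_sub]
  linear_combination (norm := module) -h'

end

section

variable {E : Type*} [NormedAddCommGroup E] [NormedSpace ℝ E]

theorem hasDerivAt_add_div_smul_sub {c d : ℝ → E} {c' d' : E} {Λ M u : ℝ} (hΛM : Λ ≠ M)
    (hc : HasDerivAt c c' u) (hd : HasDerivAt d d' u) :
    HasDerivAt (fun u => c u + ((u - M) / (Λ - M)) • (d u - c u))
      ((Λ - M)⁻¹ • ((Λ - u) • c' + (u - M) • d' + (d u - c u))) u := by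
  have hs : HasDerivAt (fun u : ℝ => (u - M) / (Λ - M)) (1 / (Λ - M)) u := by
    simpa using ((hasDerivAt_id u).sub_const M).div_const (Λ - M)
  refine (hc.add (hs.smul (hd.sub hc))).congr_deriv ?_
  have hΛM' : Λ - M ≠ 0 := sub_ne_zero.mpr hΛM
  rw [eq_inv_smul_iff₀ hΛM']
  simp only [smul_add, smul_smul, mul_div_cancel₀ _ hΛM', Pi.sub_apply]
  module

end

/-- for a developable patch with constant `Λ ≠ M`, the edge of
regression `r(u) = c(u) + ((u−M)/(Λ−M))·(d(u)−c(u))` has velocity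
`r'(u) = ((n+1)/(Λ−M))·(d(u)−c(u))`. -/
theorem edge_of_regression_constant_case
    (n : ℕ) (hn : 1 ≤ n) (c d : ℝ → Fin 3 → ℝ)
    (hc : Differentiable ℝ c) (hd : Differentiable ℝ d)
    (Λ M : ℝ) (hΛM : Λ ≠ M)
    (hdev : ∀ u, c u + ((Λ - u) / (n : ℝ)) • deriv c u
               = d u + ((M - u) / (n : ℝ)) • deriv d u)
    (r : ℝ → Fin 3 → ℝ)
    (hr : ∀ u, r u = c u + ((u - M) / (Λ - M)) • (d u - c u)) :
    ∀ u, deriv r u = (((n : ℝ) + 1) / (Λ - M)) • (d u - c u) := by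
  intro u
  have hn0 : (n : ℝ) ≠ 0 := Nat.cast_ne_zero.mpr (by omega)
  rw [funext hr, (hasDerivAt_add_div_smul_sub hΛM (hc u).hasDerivAt (hd u).hasDerivAt).deriv,
    ← smul_sub_eq_of_add_div_smul_eq hn0 (hdev u), div_eq_inv_mul, mul_smul, add_smul, one_smul]
end

section
/- Let n ≥ 1, let c, d : ℝ → ℝ³ be differentiable curves and Λ, M ∈ ℝ constants with Λ ≠ M, such that c(u) + ((Λ − u)/n)·c'(u) = d(u) + ((M − u)/n)·d'(u) for all u. Define r(u) = c(u) + ((u − M)/(Λ − M))·(d(u) − c(u)). Then for all u, c(u) = r(u) + ((M − u)/(n+1))·r'(u) and d(u) = r(u) + ((Λ − u)/(n+1))·r'(u). In particular, both boundary curves c and d lie on the tangent surface of the curve r, so the developable patch with constant Λ, M is a patch of the tangent surface to its edge of regression r; if moreover c and d are polynomial of degree at most n, then r is polynomial of degree at most n+1. -/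
/-! Expanding, `(Λ - M) • r u = (Λ - u) • c u + (u - M) • d u`. Differentiating, and using the
blossom relation in the form `(Λ - u) • c' u + (u - M) • d' u = n • (d u - c u)`, gives
`(Λ - M) • r' u = (n + 1) • (d u - c u)`. Since `c u - r u` and `d u - r u` are
`(M - u)/(Λ - M)` and `(Λ - u)/(Λ - M)` times `d u - c u`, they are `(M - u)/(n + 1)` and
`(Λ - u)/(n + 1)` times `r' u`. The degree bound holds because `r` is `c` plus a polynomial of
degree one times `d - c`. -/

def IsPolyDegLE (n : ℕ) (c : ℝ → Fin 3 → ℝ) : Prop :=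
  ∀ i, ∃ p : Polynomial ℝ, p.natDegree ≤ n ∧ ∀ u, c u i = p.eval u

open Polynomial

section EdgeOfRegression

variable {E : Type*} [NormedAddCommGroup E] [NormedSpace ℝ E]

noncomputable def edgeOfRegression (Λ M : ℝ) (c d : ℝ → E) (u : ℝ) : E :=
  c u + ((u - M) / (Λ - M)) • (d u - c u)

variable {Λ M ν u : ℝ} {c d : ℝ → E}

theorem edgeOfRegression_eq (hΛM : Λ ≠ M) :
    edgeOfRegression Λ M c d = fun u ↦ (Λ - M)⁻¹ • ((Λ - u) • c u + (u - M) • d u) := by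
  have : Λ - M ≠ 0 := sub_ne_zero.mpr hΛM
  ext u
  simp only [edgeOfRegression]
  match_scalars <;> field_simp
  ring

theorem hasDerivAt_edgeOfRegression (hΛM : Λ ≠ M) (hc : DifferentiableAt ℝ c u)
    (hd : DifferentiableAt ℝ d u) :
    HasDerivAt (edgeOfRegression Λ M c d)
      ((Λ - M)⁻¹ • (d u - c u + (Λ - u) • deriv c u + (u - M) • deriv d u)) u := by
  rw [edgeOfRegression_eq hΛM]
  refine HasDerivAt.const_smul _ ?_
  refine ((((hasDerivAt_id' u).const_sub Λ).smul hc.hasDerivAt).add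
    (((hasDerivAt_id' u).sub_const M).smul hd.hasDerivAt)).congr_deriv ?_
  module

theorem deriv_edgeOfRegression (hΛM : Λ ≠ M) (hν : ν ≠ 0) (hc : DifferentiableAt ℝ c u)
    (hd : DifferentiableAt ℝ d u)
    (hdev : c u + ((Λ - u) / ν) • deriv c u = d u + ((M - u) / ν) • deriv d u) :
    deriv (edgeOfRegression Λ M c d) u = ((ν + 1) / (Λ - M)) • (d u - c u) := by
  rw [(hasDerivAt_edgeOfRegression hΛM hc hd).deriv]
  have hblossom : (Λ - u) • deriv c u + (u - M) • deriv d u = ν • (d u - c u) := by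
    have := congrArg (ν • ·) hdev
    simp only [smul_add, smul_smul, mul_div_cancel₀ _ hν] at this
    linear_combination (norm := module) this
  rw [add_assoc, hblossom]
  module

theorem edgeOfRegression_add_smul_deriv_left (hΛM : Λ ≠ M) (hν : ν ≠ 0) (hν₁ : ν + 1 ≠ 0)
    (hc : DifferentiableAt ℝ c u) (hd : DifferentiableAt ℝ d u)
    (hdev : c u + ((Λ - u) / ν) • deriv c u = d u + ((M - u) / ν) • deriv d u) :
    c u = edgeOfRegression Λ M c d u
      + ((M - u) / (ν + 1)) • deriv (edgeOfRegression Λ M c d) u := by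
  have : Λ - M ≠ 0 := sub_ne_zero.mpr hΛM
  rw [deriv_edgeOfRegression hΛM hν hc hd hdev, edgeOfRegression]
  match_scalars <;> field_simp <;> ring

theorem edgeOfRegression_add_smul_deriv_right (hΛM : Λ ≠ M) (hν : ν ≠ 0) (hν₁ : ν + 1 ≠ 0)
    (hc : DifferentiableAt ℝ c u) (hd : DifferentiableAt ℝ d u)
    (hdev : c u + ((Λ - u) / ν) • deriv c u = d u + ((M - u) / ν) • deriv d u) :
    d u = edgeOfRegression Λ M c d u
      + ((Λ - u) / (ν + 1)) • deriv (edgeOfRegression Λ M c d) u := by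
  have : Λ - M ≠ 0 := sub_ne_zero.mpr hΛM
  rw [deriv_edgeOfRegression hΛM hν hc hd hdev, edgeOfRegression]
  match_scalars <;> field_simp <;> ring

end EdgeOfRegression

namespace IsPolyDegLE

variable {n : ℕ} {c d : ℝ → Fin 3 → ℝ}

theorem mono {m : ℕ} (hc : IsPolyDegLE n c) (hnm : n ≤ m) : IsPolyDegLE m c := fun i ↦
  let ⟨p, hp, hpc⟩ := hc i
  ⟨p, hp.trans hnm, hpc⟩

theorem add (hc : IsPolyDegLE n c) (hd : IsPolyDegLE n d) : IsPolyDegLE n (c + d) := fun i ↦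
  let ⟨p, hp, hpc⟩ := hc i
  let ⟨q, hq, hqd⟩ := hd i
  ⟨p + q, (natDegree_add_le p q).trans (max_le hp hq), fun u ↦ by simp [hpc, hqd]⟩

theorem sub (hc : IsPolyDegLE n c) (hd : IsPolyDegLE n d) : IsPolyDegLE n (c - d) := fun i ↦
  let ⟨p, hp, hpc⟩ := hc i
  let ⟨q, hq, hqd⟩ := hd i
  ⟨p - q, (natDegree_sub_le p q).trans (max_le hp hq), fun u ↦ by simp [hpc, hqd]⟩

theorem polynomial_smul {f : ℝ[X]} {k : ℕ} (hc : IsPolyDegLE n c) (hf : f.natDegree ≤ k) :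
    IsPolyDegLE (n + k) (fun u ↦ f.eval u • c u) := fun i ↦
  let ⟨p, hp, hpc⟩ := hc i
  ⟨p * f, natDegree_mul_le.trans (add_le_add hp hf), fun u ↦ by simp [hpc, mul_comm]⟩

theorem edgeOfRegression {Λ M : ℝ} (hc : IsPolyDegLE n c) (hd : IsPolyDegLE n d) :
    IsPolyDegLE (n + 1) (edgeOfRegression Λ M c d) := by
  have hf : (C (Λ - M)⁻¹ * (X - C M)).natDegree ≤ 1 :=
    (natDegree_C_mul_le _ _).trans (natDegree_X_sub_C M).le
  convert (hc.mono n.le_succ).add ((hd.sub hc).polynomial_smul hf) using 1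
  ext u
  simp [_root_.edgeOfRegression, div_eq_inv_mul]

end IsPolyDegLE

/-- for a developable patch with constant `Λ ≠ M` and edge of
regression `r(u) = c(u) + ((u−M)/(Λ−M))·(d(u)−c(u))`, the boundary curves
satisfy `c(u) = r(u) + ((M−u)/(n+1))·r'(u)` and `d(u) = r(u) + ((Λ−u)/(n+1))·r'(u)`,
so they lie on the tangent surface of `r`; moreover, if `c` and `d` are
polynomial of degree at most `n`, then `r` is polynomial of degree at most `n+1`. -/
theorem constant_case_is_tangent_surface
    (n : ℕ) (hn : 1 ≤ n) (c d : ℝ → Fin 3 → ℝ)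
    (hc : Differentiable ℝ c) (hd : Differentiable ℝ d)
    (Λ M : ℝ) (hΛM : Λ ≠ M)
    (hdev : ∀ u, c u + ((Λ - u) / (n : ℝ)) • deriv c u
               = d u + ((M - u) / (n : ℝ)) • deriv d u)
    (r : ℝ → Fin 3 → ℝ)
    (hr : ∀ u, r u = c u + ((u - M) / (Λ - M)) • (d u - c u)) :
    (∀ u, c u = r u + ((M - u) / ((n : ℝ) + 1)) • deriv r u
        ∧ d u = r u + ((Λ - u) / ((n : ℝ) + 1)) • deriv r u) ∧
    (IsPolyDegLE n c → IsPolyDegLE n d → IsPolyDegLE (n + 1) r) := by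
  obtain rfl : r = edgeOfRegression Λ M c d := funext hr
  have hn₀ : (n : ℝ) ≠ 0 := Nat.cast_ne_zero.mpr (Nat.one_le_iff_ne_zero.mp hn)
  have hn₁ : (n : ℝ) + 1 ≠ 0 := by positivity
  refine ⟨fun u ↦ ⟨?_, ?_⟩, IsPolyDegLE.edgeOfRegression⟩
  · exact edgeOfRegression_add_smul_deriv_left hΛM hn₀ hn₁ (hc u) (hd u) (hdev u)
  · exact edgeOfRegression_add_smul_deriv_right hΛM hn₀ hn₁ (hc u) (hd u) (hdev u)
end

section
/- Let n ≥ 1, let r : ℝ → ℝ³ be a polynomial curve of degree at most n+1, and let b₁, b₂ ∈ ℝ. Define c(u) = r(u) + (b₁ − u/(n+1))·r'(u) and d(u) = r(u) + (b₂ − u/(n+1))·r'(u). Then c and d are polynomial curves of degree at most n, and with the constants Λ = (n+1)·b₂ and M = (n+1)·b₁ one has c(u) + ((Λ − u)/n)·c'(u) = d(u) + ((M − u)/n)·d'(u) for all u. Hence every tangent surface to a polynomial curve of degree n+1 can be parametrised as a developable surface patch of degree (n,1) with constant Λ, M. -/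
private lemma deriv_of_poly3 (f : ℝ → Fin 3 → ℝ) (p : Fin 3 → Polynomial ℝ)
    (h : ∀ i u, f u i = (p i).eval u) (u : ℝ) :
    deriv f u = fun i => (p i).derivative.eval u := by
  have hf : ∀ i, (fun x => f x i) = fun x => (p i).eval x := fun i => funext (h i)
  rw [deriv_pi (fun i => by rw [hf i]; exact (p i).differentiable.differentiableAt)]
  funext i
  rw [hf i, Polynomial.deriv]

private noncomputable def qpoly (n : ℕ) (b : ℝ) (p : Polynomial ℝ) : Polynomial ℝ :=
  p + (Polynomial.C b - Polynomial.C (((n : ℝ) + 1)⁻¹) * Polynomial.X) * p.derivative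

private lemma qpoly_deg (n : ℕ) (b : ℝ) (p : Polynomial ℝ) (hp : p.natDegree ≤ n + 1) :
    (qpoly n b p).natDegree ≤ n := by
  rw [Polynomial.natDegree_le_iff_coeff_eq_zero]
  intro m hm
  obtain ⟨k, rfl⟩ := Nat.exists_eq_succ_of_ne_zero (n := m) (by omega)
  have hco : ∀ j, n + 1 < j → p.coeff j = 0 := fun j hj =>
    Polynomial.coeff_eq_zero_of_natDegree_lt (lt_of_le_of_lt hp hj)
  simp only [qpoly, Polynomial.coeff_add, Polynomial.coeff_sub, sub_mul, mul_assoc,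
    Polynomial.coeff_C_mul, Nat.succ_eq_add_one]
  rw [Polynomial.coeff_X_mul, Polynomial.coeff_derivative, Polynomial.coeff_derivative]
  rcases Nat.lt_or_ge k (n + 1) with hk | hk
  · have hkn : k = n := by omega
    have h2 : p.coeff (k + 1 + 1) = 0 := hco _ (by omega)
    have hne : ((n : ℝ) + 1) ≠ 0 := by positivity
    rw [h2, hkn]
    push_cast
    field_simp
    ring
  · have h1 : p.coeff (k + 1) = 0 := hco _ (by omega)
    have h2 : p.coeff (k + 1 + 1) = 0 := hco _ (by omega)
    rw [h1, h2]
    ring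

private lemma qpoly_eval (n : ℕ) (b : ℝ) (p : Polynomial ℝ) (u : ℝ) :
    (qpoly n b p).eval u = p.eval u + (b - u / ((n : ℝ) + 1)) * p.derivative.eval u := by
  simp [qpoly, div_eq_inv_mul]

private lemma qpoly_deriv_eval (n : ℕ) (b : ℝ) (p : Polynomial ℝ) (u : ℝ) :
    (qpoly n b p).derivative.eval u =
      p.derivative.eval u - ((n : ℝ) + 1)⁻¹ * p.derivative.eval u +
        (b - u / ((n : ℝ) + 1)) * p.derivative.derivative.eval u := by
  simp [qpoly, div_eq_inv_mul]
  ring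

/-- every tangent surface to a polynomial curve `r` of degree
`n+1` can be parametrised as a developable patch of degree `(n,1)` with constant
`Λ, M`: the curves `c(u) = r(u) + (b₁ − u/(n+1))·r'(u)` and
`d(u) = r(u) + (b₂ − u/(n+1))·r'(u)` are polynomial of degree at most `n` and
satisfy the developability relation with `Λ = (n+1)·b₂` and `M = (n+1)·b₁`. -/
theorem tangent_surface_has_constant_lambda_mu
    (n : ℕ) (hn : 1 ≤ n) (r : ℝ → Fin 3 → ℝ) (hr : IsPolyDegLE (n + 1) r)
    (b₁ b₂ : ℝ) (c d : ℝ → Fin 3 → ℝ)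
    (hc : ∀ u, c u = r u + (b₁ - u / ((n : ℝ) + 1)) • deriv r u)
    (hd : ∀ u, d u = r u + (b₂ - u / ((n : ℝ) + 1)) • deriv r u)
    (Λ M : ℝ) (hΛ : Λ = ((n : ℝ) + 1) * b₂) (hM : M = ((n : ℝ) + 1) * b₁) :
    IsPolyDegLE n c ∧ IsPolyDegLE n d ∧
    ∀ u, c u + ((Λ - u) / (n : ℝ)) • deriv c u
       = d u + ((M - u) / (n : ℝ)) • deriv d u := by
  choose p hdeg hval using hr
  have hval' : ∀ i u, r u i = (p i).eval u := fun i u => hval i u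
  have hdr : ∀ u, deriv r u = fun i => (p i).derivative.eval u :=
    deriv_of_poly3 r p hval'
  have hcomp_c : ∀ i u, c u i = (qpoly n b₁ (p i)).eval u := by
    intro i u
    rw [hc u, qpoly_eval]
    simp [hdr u, hval' i u]
  have hcomp_d : ∀ i u, d u i = (qpoly n b₂ (p i)).eval u := by
    intro i u
    rw [hd u, qpoly_eval]
    simp [hdr u, hval' i u]
  have hdc : ∀ u, deriv c u = fun i => (qpoly n b₁ (p i)).derivative.eval u :=
    deriv_of_poly3 c _ hcomp_c
  have hdd : ∀ u, deriv d u = fun i => (qpoly n b₂ (p i)).derivative.eval u :=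
    deriv_of_poly3 d _ hcomp_d
  refine ⟨fun i => ⟨qpoly n b₁ (p i), qpoly_deg n b₁ (p i) (hdeg i), fun u => hcomp_c i u⟩,
    fun i => ⟨qpoly n b₂ (p i), qpoly_deg n b₂ (p i) (hdeg i), fun u => hcomp_d i u⟩,
    fun u => ?_⟩
  funext i
  have hne : (n : ℝ) ≠ 0 := by
    have : (1 : ℝ) ≤ (n : ℝ) := by exact_mod_cast hn
    linarith
  have hne1 : ((n : ℝ) + 1) ≠ 0 := by positivity
  simp only [Pi.add_apply, Pi.smul_apply, smul_eq_mul, hdc u, hdd u,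
    hcomp_c i u, hcomp_d i u, qpoly_eval, qpoly_deriv_eval, hΛ, hM]
  field_simp
  ring
end
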